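/- arXiv:1709.01567 — 5 statements merged into one kernel-verified Lean document; each statement's English description precedes it below -/
import Mathlib

section
/- Let h be a finite-dimensional real Lie algebra, β a closed alternating 2-form on h, and let g = ℝA ⋉_D (ℝξ ⊕_β h) be the double extension of h by a derivation D of the central extension h_β(ξ). Then g is unimodular (tr(ad_x) = 0 for all x ∈ g) if and only if h is unimodular and tr(D) = 0. -/
/-- The bracket of the central extension `h_β(ξ) = ℝξ ⊕ h`. -/
def ceBracket {h : Type*} [LieRing h] [LieAlgebra ℝ h]
    (β : h →ₗ[ℝ] h →ₗ[ℝ] ℝ) : (ℝ × h) → (ℝ × h) → (ℝ × h) :=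
  fun u v => (β u.2 v.2, ⁅u.2, v.2⁆)

/-- The adjoint operator `ad_u` of the central extension `h_β(ξ)`, as a linear map. -/
def ceAd {h : Type*} [LieRing h] [LieAlgebra ℝ h]
    (β : h →ₗ[ℝ] h →ₗ[ℝ] ℝ) (u : ℝ × h) : (ℝ × h) →ₗ[ℝ] (ℝ × h) :=
  ((β u.2).comp (LinearMap.snd ℝ ℝ h)).prod
    ((LieAlgebra.ad ℝ h u.2).comp (LinearMap.snd ℝ ℝ h))

/-- The adjoint operator `ad_x` of the double extension
`g = ℝA ⋉_D (ℝξ ⊕_β h)`, where `x = (a, u)` acts on `(b, v)` by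
`[x, y] = (0, a • D v - b • D u + [u, v]_β)`. -/
noncomputable def deAd {h : Type*} [LieRing h] [LieAlgebra ℝ h]
    (β : h →ₗ[ℝ] h →ₗ[ℝ] ℝ) (D : (ℝ × h) →ₗ[ℝ] (ℝ × h)) (x : ℝ × (ℝ × h)) :
    (ℝ × (ℝ × h)) →ₗ[ℝ] (ℝ × (ℝ × h)) :=
  (0 : (ℝ × (ℝ × h)) →ₗ[ℝ] ℝ).prod
    (x.1 • (D.comp (LinearMap.snd ℝ ℝ (ℝ × h)))
      - (LinearMap.fst ℝ ℝ (ℝ × h)).smulRight (D x.2)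
      + (ceAd β x.2).comp (LinearMap.snd ℝ ℝ (ℝ × h)))

-- Auxiliary trace computations
lemma trace_ceAd {h : Type*} [LieRing h] [LieAlgebra ℝ h] [Module.Finite ℝ h]
    (β : h →ₗ[ℝ] h →ₗ[ℝ] ℝ) (u : ℝ × h) :
    LinearMap.trace ℝ _ (ceAd β u) = LinearMap.trace ℝ h (LieAlgebra.ad ℝ h u.2) := by
  have hdecomp : ceAd β u =
      (LinearMap.inl ℝ ℝ h).comp (((β u.2).comp (LinearMap.snd ℝ ℝ h)))
        + (LinearMap.inr ℝ ℝ h).comp ((LieAlgebra.ad ℝ h u.2).comp (LinearMap.snd ℝ ℝ h)) := by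
    ext v <;> simp [ceAd]
  rw [hdecomp, map_add, LinearMap.trace_comp_comm' _ (LinearMap.inl ℝ ℝ h),
    LinearMap.trace_comp_comm' _ (LinearMap.inr ℝ ℝ h)]
  have h1 : (((β u.2).comp (LinearMap.snd ℝ ℝ h)).comp (LinearMap.inl ℝ ℝ h)) = 0 := by
    ext; simp
  have h2 : (((LieAlgebra.ad ℝ h u.2).comp (LinearMap.snd ℝ ℝ h)).comp (LinearMap.inr ℝ ℝ h))
      = LieAlgebra.ad ℝ h u.2 := by ext; simp
  rw [h1, h2, map_zero, zero_add]

lemma trace_deAd {h : Type*} [LieRing h] [LieAlgebra ℝ h] [Module.Finite ℝ h]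
    (β : h →ₗ[ℝ] h →ₗ[ℝ] ℝ) (D : (ℝ × h) →ₗ[ℝ] (ℝ × h)) (x : ℝ × (ℝ × h)) :
    LinearMap.trace ℝ _ (deAd β D x)
      = x.1 * LinearMap.trace ℝ (ℝ × h) D + LinearMap.trace ℝ h (LieAlgebra.ad ℝ h x.2.2) := by
  set M : (ℝ × (ℝ × h)) →ₗ[ℝ] (ℝ × h) :=
    x.1 • (D.comp (LinearMap.snd ℝ ℝ (ℝ × h)))
      - (LinearMap.fst ℝ ℝ (ℝ × h)).smulRight (D x.2)
      + (ceAd β x.2).comp (LinearMap.snd ℝ ℝ (ℝ × h)) with hM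
  have h1 : deAd β D x = (LinearMap.inr ℝ ℝ (ℝ × h)).comp M := by
    ext v <;> simp [deAd, hM]
  have h2 : M.comp (LinearMap.inr ℝ ℝ (ℝ × h)) = x.1 • D + ceAd β x.2 := by
    ext v <;> simp [hM]
  rw [h1, LinearMap.trace_comp_comm', h2, map_add, map_smul, smul_eq_mul, trace_ceAd]

/-- The double extension `g = ℝA ⋉_D (ℝξ ⊕_β h)` of a
finite-dimensional real Lie algebra `h` by a closed 2-form `β` and a derivation
`D` of the central extension is unimodular if and only if `h` is unimodular and
`tr D = 0`. -/
theorem doubleExtension_unimodular_iff {h : Type*} [LieRing h] [LieAlgebra ℝ h]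
    [Module.Finite ℝ h]
    (β : h →ₗ[ℝ] h →ₗ[ℝ] ℝ)
    (halt : ∀ x : h, β x x = 0)
    (hclosed : ∀ x y z : h, β ⁅x, y⁆ z + β ⁅y, z⁆ x + β ⁅z, x⁆ y = 0)
    (D : (ℝ × h) →ₗ[ℝ] (ℝ × h))
    (hder : ∀ u v : ℝ × h,
      D (ceBracket β u v) = ceBracket β (D u) v + ceBracket β u (D v)) :
    (∀ x : ℝ × (ℝ × h), LinearMap.trace ℝ _ (deAd β D x) = 0) ↔
      ((∀ y : h, LinearMap.trace ℝ h (LieAlgebra.ad ℝ h y) = 0) ∧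
        LinearMap.trace ℝ (ℝ × h) D = 0) := by

  constructor
  · intro H
    constructor
    · intro y
      have := H (0, (0, y))
      rwa [trace_deAd, zero_mul, zero_add] at this
    · have := H (1, (0, 0))
      rw [trace_deAd] at this
      simpa using this
  · rintro ⟨h1, h2⟩ x
    rw [trace_deAd, h2, mul_zero, zero_add, h1]
end

section
/- Let (k, ⟨·,·⟩) be a finite-dimensional real Lie algebra with a flat left-invariant metric, with orthogonal decomposition k = z ⊕ h ⊕ k' as in Milnor's theorem (z the center, h and k' = [k,k] abelian, ad : h → so(k') injective). If D is a skew-symmetric derivation of k, then D vanishes on h. -/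
/-! A skew derivation `D` preserves the center and `[k, k]`, so `D H` is orthogonal to `z ⊕ k'`,
i.e. `D H ∈ h`. Since `h` is abelian, `ad (D H) = [D, ad H]` commutes with `ad H`, hence
`tr (ad (D H) ^ 2) = tr (D [ad H, ad (D H)]) = 0`. As `ad (D H)` is skew, this trace is
`-∑ ‖ad (D H) eᵢ‖²` over an orthonormal basis, so `ad (D H) = 0`, and injectivity of `ad` on `h`
gives `D H = 0`. -/

theorem Submodule.mem_of_sup_eq_top_of_le_ker {R M : Type*} [CommRing R] [AddCommGroup M]
    [Module R M] {B : M →ₗ[R] M →ₗ[R] R} (hB : ∀ x, B x x = 0 → x = 0)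
    {U V : Submodule R M} (hUV : U ⊔ V = ⊤) (hVU : ∀ v ∈ V, U ≤ LinearMap.ker (B v))
    {x : M} (hx : U ≤ LinearMap.ker (B x)) : x ∈ V := by
  obtain ⟨u, hu, v, hv, rfl⟩ := Submodule.mem_sup.mp (hUV ▸ Submodule.mem_top : x ∈ U ⊔ V)
  have hxu : B (u + v) u = 0 := hx hu
  have hvu : B v u = 0 := hVU v hv hu
  rw [map_add, LinearMap.add_apply, hvu, add_zero] at hxu
  rwa [hB u hxu, zero_add]

open scoped InnerProductSpace in
theorem LinearMap.eq_zero_of_inner_skew_of_trace_mul_self_eq_zero {𝕜 E : Type*} [RCLike 𝕜]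
    [NormedAddCommGroup E] [InnerProductSpace 𝕜 E] [FiniteDimensional 𝕜 E] {T : E →ₗ[𝕜] E}
    (hT : ∀ x y, ⟪T x, y⟫_𝕜 = -⟪x, T y⟫_𝕜) (htr : trace 𝕜 E (T * T) = 0) : T = 0 := by
  let b := stdOrthonormalBasis 𝕜 E
  have hsum : ∑ i, ‖T (b i)‖ ^ 2 = 0 := by
    have hdiag : ∀ i, ⟪b i, (T * T) (b i)⟫_𝕜 = -((‖T (b i)‖ ^ 2 : ℝ) : 𝕜) := fun i => by
      rw [Module.End.mul_apply, RCLike.ofReal_pow, ← inner_self_eq_norm_sq_to_K, hT, neg_neg]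
    rwa [trace_eq_sum_inner _ b, Finset.sum_congr rfl fun i _ => hdiag i, Finset.sum_neg_distrib,
      neg_eq_zero, ← RCLike.ofReal_sum, RCLike.ofReal_eq_zero] at htr
  have hzero : ∀ i, T (b i) = 0 := fun i => by
    simpa using (Finset.sum_eq_zero_iff_of_nonneg fun j _ => sq_nonneg ‖T (b j)‖).mp hsum i
      (Finset.mem_univ i)
  exact b.toBasis.ext fun i => by simpa using hzero i

theorem LinearMap.eq_zero_of_bilin_skew_of_trace_mul_self_eq_zero {M : Type*} [AddCommGroup M]
    [Module ℝ M] [Module.Finite ℝ M] {B : M →ₗ[ℝ] M →ₗ[ℝ] ℝ} (hsymm : ∀ x y, B x y = B y x)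
    (hpos : ∀ x, x ≠ 0 → 0 < B x x) {T : M →ₗ[ℝ] M} (hT : ∀ x y, B (T x) y = -B x (T y))
    (htr : trace ℝ M (T * T) = 0) : T = 0 := by
  let core : InnerProductSpace.Core ℝ M :=
    { inner := fun x y => B x y
      conj_inner_symm := fun x y => hsymm y x
      re_inner_nonneg := fun x => by
        rcases eq_or_ne x 0 with rfl | hx
        · simp
        · exact (hpos x hx).le
      definite := fun x => not_imp_not.mp fun hx => (hpos x hx).ne'
      add_left := fun x y w => by simp
      smul_left := fun x y r => by simp }
  let : NormedAddCommGroup M := core.toNormedAddCommGroup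
  let : InnerProductSpace ℝ M := InnerProductSpace.ofCore core.toCore
  exact eq_zero_of_inner_skew_of_trace_mul_self_eq_zero hT htr

namespace LieDerivation

variable {R L : Type*} [CommRing R] [LieRing L] [LieAlgebra R L] (D : LieDerivation R L L)

theorem apply_mem_center {x : L} (hx : x ∈ LieAlgebra.center R L) :
    D x ∈ LieAlgebra.center R L := by
  rw [← ad_ker_eq_center, LieHom.mem_ker] at hx ⊢
  rw [← lie_der_ad_eq_ad_der, hx, lie_zero]

theorem apply_mem_lie {I J : LieIdeal R L} (hI : ∀ x ∈ I, D x ∈ I) (hJ : ∀ x ∈ J, D x ∈ J)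
    {x : L} (hx : x ∈ ⁅I, J⁆) : D x ∈ ⁅I, J⁆ := by
  rw [← LieSubmodule.mem_toSubmodule, LieSubmodule.lieIdeal_oper_eq_linear_span'] at hx
  induction hx using Submodule.span_induction with
  | mem _ h =>
    obtain ⟨a, ha, b, hb, rfl⟩ := h
    rw [apply_lie_eq_add, add_comm]
    exact add_mem (LieSubmodule.lie_mem_lie (hI a ha) hb) (LieSubmodule.lie_mem_lie ha (hJ b hb))
  | zero => simp
  | add _ _ _ _ ha hb => simpa using add_mem ha hb
  | smul r _ _ ha => simpa using SMulMemClass.smul_mem r ha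

theorem apply_mem_derivedSeries (n : ℕ) {x : L} (hx : x ∈ LieAlgebra.derivedSeries R L n) :
    D x ∈ LieAlgebra.derivedSeries R L n := by
  induction n generalizing x with
  | zero => trivial
  | succ n ih =>
    rw [LieAlgebra.derivedSeries_def, LieAlgebra.derivedSeriesOfIdeal_succ] at hx ⊢
    exact D.apply_mem_lie (fun _ => ih) (fun _ => ih) hx

theorem trace_ad_apply_mul_self_eq_zero {x : L} (hx : ⁅x, D x⁆ = 0) :
    LinearMap.trace R L (LieAlgebra.ad R L (D x) * LieAlgebra.ad R L (D x)) = 0 := by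
  simp only [← coe_ad_apply_eq_ad_apply]
  nth_rw 1 [← lie_der_ad_eq_ad_der]
  rw [commutator_coe_linear_map, LinearMap.trace_lie_mul_eq, ← commutator_coe_linear_map,
    ← LieHom.map_lie, hx, map_zero, coe_zero_linearMap, mul_zero, map_zero]

end LieDerivation

theorem skew_derivation_vanishes_on_h_general {k : Type*} [LieRing k] [LieAlgebra ℝ k]
    [Module.Finite ℝ k]
    (B : k →ₗ[ℝ] k →ₗ[ℝ] ℝ)
    (hsymm : ∀ x y : k, B x y = B y x)
    (hpos : ∀ x : k, x ≠ 0 → 0 < B x x)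
    (z h k' : Submodule ℝ k)
    (hz : ∀ x : k, x ∈ z ↔ ∀ y : k, ⁅x, y⁆ = 0)
    (hk' : ∀ x : k, x ∈ k' ↔ x ∈ LieAlgebra.derivedSeries ℝ k 1)
    (hhab : ∀ x ∈ h, ∀ y ∈ h, ⁅x, y⁆ = (0 : k))
    (hspan : z ⊔ h ⊔ k' = ⊤)
    (horth₁ : ∀ x ∈ z, ∀ y ∈ h, B x y = 0)
    (horth₃ : ∀ x ∈ h, ∀ y ∈ k', B x y = 0)
    (hadskew : ∀ H ∈ h, ∀ y w : k, B ⁅H, y⁆ w = - B y ⁅H, w⁆)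
    (hadinj : ∀ H ∈ h, (∀ y ∈ k', ⁅H, y⁆ = (0 : k)) → H = 0)
    (D : k →ₗ[ℝ] k)
    (hder : ∀ x y : k, D ⁅x, y⁆ = ⁅D x, y⁆ + ⁅x, D y⁆)
    (hDskew : ∀ x y : k, B (D x) y = - B x (D y)) :
    ∀ H ∈ h, D H = 0 := by
  have hB : ∀ x : k, B x x = 0 → x = 0 := fun x => not_imp_not.mp fun hx => (hpos x hx).ne'
  let δ : LieDerivation ℝ k k :=
    { toLinearMap := D
      leibniz' := fun x y => by rw [hder, ← lie_skew y (D x)]; abel }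
  have hDz : ∀ x ∈ z, D x ∈ z := fun x hx => by
    have hcenter : ∀ x, x ∈ z ↔ x ∈ LieAlgebra.center ℝ k := fun x => by
      rw [hz, LieAlgebra.center, LieModule.mem_maxTrivSubmodule]
      exact forall_congr' fun y => by rw [← lie_skew, neg_eq_zero]
    exact (hcenter _).2 (δ.apply_mem_center ((hcenter x).1 hx))
  have hDk' : ∀ x ∈ k', D x ∈ k' := fun x hx =>
    (hk' _).2 (δ.apply_mem_derivedSeries 1 ((hk' x).1 hx))
  have hperp : ∀ w ∈ h, z ⊔ k' ≤ LinearMap.ker (B w) := fun w hw =>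
    sup_le (fun a ha => by rw [LinearMap.mem_ker, hsymm]; exact horth₁ a ha w hw)
      (fun c hc => horth₃ w hw c hc)
  intro H hH
  have hDH : D H ∈ h := by
    refine Submodule.mem_of_sup_eq_top_of_le_ker hB (by rwa [sup_right_comm] at hspan) hperp ?_
    have hinv : z ⊔ k' ≤ (z ⊔ k').comap D :=
      sup_le (fun a ha => Submodule.mem_sup_left (hDz a ha))
        (fun c hc => Submodule.mem_sup_right (hDk' c hc))
    intro u hu
    rw [LinearMap.mem_ker, hDskew, hperp H hH (hinv hu), neg_zero]
  have had : LieAlgebra.ad ℝ k (D H) = 0 :=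
    LinearMap.eq_zero_of_bilin_skew_of_trace_mul_self_eq_zero hsymm hpos (hadskew _ hDH)
      (δ.trace_ad_apply_mul_self_eq_zero (hhab H hH _ hDH))
  exact hadinj _ hDH fun y _ => LinearMap.congr_fun had y

/-- Let `(k, ⟨·,·⟩)` be a flat Lie algebra with orthogonal Milnor
decomposition `k = z ⊕ h ⊕ k'` (`z` the center, `h` and `k' = [k,k]` abelian,
`ad : h → so(k')` injective). Any skew-symmetric derivation `D` of `k`
vanishes on `h`. -/
theorem skew_derivation_vanishes_on_h {k : Type*} [LieRing k] [LieAlgebra ℝ k]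
    [Module.Finite ℝ k]
    (B : k →ₗ[ℝ] k →ₗ[ℝ] ℝ)
    (hsymm : ∀ x y : k, B x y = B y x)
    (hpos : ∀ x : k, x ≠ 0 → 0 < B x x)
    (z h k' : Submodule ℝ k)
    (hz : ∀ x : k, x ∈ z ↔ ∀ y : k, ⁅x, y⁆ = 0)
    (hk' : ∀ x : k, x ∈ k' ↔ x ∈ LieAlgebra.derivedSeries ℝ k 1)
    (hhab : ∀ x ∈ h, ∀ y ∈ h, ⁅x, y⁆ = (0 : k))
    (hk'ab : ∀ x ∈ k', ∀ y ∈ k', ⁅x, y⁆ = (0 : k))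
    (hspan : z ⊔ h ⊔ k' = ⊤)
    (horth₁ : ∀ x ∈ z, ∀ y ∈ h, B x y = 0)
    (horth₂ : ∀ x ∈ z, ∀ y ∈ k', B x y = 0)
    (horth₃ : ∀ x ∈ h, ∀ y ∈ k', B x y = 0)
    (hadinv : ∀ H ∈ h, ∀ y ∈ k', ⁅H, y⁆ ∈ k')
    (hadskew : ∀ H ∈ h, ∀ y w : k, B ⁅H, y⁆ w = - B y ⁅H, w⁆)
    (hadinj : ∀ H ∈ h, (∀ y ∈ k', ⁅H, y⁆ = (0 : k)) → H = 0)
    (D : k →ₗ[ℝ] k)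
    (hder : ∀ x y : k, D ⁅x, y⁆ = ⁅D x, y⁆ + ⁅x, D y⁆)
    (hDskew : ∀ x y : k, B (D x) y = - B x (D y)) :
    ∀ H ∈ h, D H = 0 :=
  skew_derivation_vanishes_on_h_general B hsymm hpos z h k' hz hk' hhab hspan horth₁ horth₃ hadskew
    hadinj D hder hDskew
end

section
/- Let V be a finite-dimensional real inner product space and F a commuting family of skew-symmetric endomorphisms of V. Then there exists an orthonormal basis {e_1, f_1, …, e_n, f_n} ∪ (basis of the common kernel) of V in which every T ∈ F is represented by a block-diagonal matrix with 2×2 blocks of the form [[0, -λ_i(T)], [λ_i(T), 0]] on span{e_i, f_i}. -/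
/-!
Induct on the dimension of an `F`-invariant subspace `W` meeting the common kernel of `F`
trivially. Each product `S T` with `S, T ∈ F` is symmetric and commutes with `F`, so it acts as a
scalar on a minimal nonzero invariant subspace `U ≤ W`. Choosing `T₀ ∈ F` nonzero on `U`, `T₀²`
is a negative scalar there and every `S ∈ F` is a multiple of `T₀` on `U`; hence a unit vector
`e ∈ U` and `f = T₀ e / ‖T₀ e‖` span a plane on which all of `F` acts by `2 × 2` rotation blocks.
Skewness makes the orthogonal complement of that plane in `W` invariant again. Finally, an
orthonormal basis of the common kernel supplies the vectors killed by `F`.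
-/

open Module Submodule
open scoped InnerProductSpace RealInnerProductSpace

theorem Orthonormal.sum_elim {𝕜 E ι κ : Type*} [RCLike 𝕜] [NormedAddCommGroup E]
    [InnerProductSpace 𝕜 E] {v : ι → E} {w : κ → E} (hv : Orthonormal 𝕜 v)
    (hw : Orthonormal 𝕜 w) (hvw : ∀ i j, ⟪v i, w j⟫_𝕜 = 0) :
    Orthonormal 𝕜 (Sum.elim v w) := by
  classical
  rw [orthonormal_iff_ite] at hv hw ⊢
  rintro (i | i) (j | j)
  · simpa using hv i j
  · simpa using hvw i j
  · simpa [inner_eq_zero_symm] using hvw j i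
  · simpa using hw i j

theorem Submodule.exists_orthonormal_span_eq {𝕜 E : Type*} [RCLike 𝕜] [NormedAddCommGroup E]
    [InnerProductSpace 𝕜 E] [FiniteDimensional 𝕜 E] (K : Submodule 𝕜 E) :
    ∃ (m : ℕ) (g : Fin m → E), Orthonormal 𝕜 g ∧ span 𝕜 (Set.range g) = K := by
  let b := stdOrthonormalBasis 𝕜 K
  refine ⟨_, K.subtypeₗᵢ ∘ b, b.orthonormal.comp_linearIsometry _, ?_⟩
  change span 𝕜 (Set.range (K.subtype ∘ b)) = K
  rw [Set.range_comp, span_image, ← b.coe_toBasis, b.toBasis.span_eq, map_top, range_subtype]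

section SkewFamily

variable {V : Type*} [NormedAddCommGroup V] [InnerProductSpace ℝ V]

def IsInvariantSubmodule (F : Set (V →ₗ[ℝ] V)) (U : Submodule ℝ V) : Prop :=
  ∀ T ∈ F, ∀ x ∈ U, T x ∈ U

namespace IsInvariantSubmodule

variable {F : Set (V →ₗ[ℝ] V)} {U W : Submodule ℝ V}

theorem inf (hU : IsInvariantSubmodule F U) (hW : IsInvariantSubmodule F W) :
    IsInvariantSubmodule F (U ⊓ W) :=
  fun T hT x hx => ⟨hU T hT x hx.1, hW T hT x hx.2⟩

theorem orthogonal (hskew : ∀ T ∈ F, ∀ x y, ⟪T x, y⟫ = -⟪x, T y⟫)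
    (hU : IsInvariantSubmodule F U) : IsInvariantSubmodule F Uᗮ := by
  intro T hT x hx u hu
  have h := hskew T hT u x
  rw [inner_right_of_mem_orthogonal (hU T hT u hu) hx] at h
  linarith

end IsInvariantSubmodule

theorem LinearMap.isSymmetric_comp_of_skew {S T : V →ₗ[ℝ] V}
    (hS : ∀ x y, ⟪S x, y⟫ = -⟪x, S y⟫) (hT : ∀ x y, ⟪T x, y⟫ = -⟪x, T y⟫)
    (hST : ∀ x, S (T x) = T (S x)) : (S ∘ₗ T).IsSymmetric := by
  intro x y
  rw [comp_apply, comp_apply, hS, hT, neg_neg, hST]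

section Minimal

variable [FiniteDimensional ℝ V] {F : Set (V →ₗ[ℝ] V)} {U : Submodule ℝ V}

theorem LinearMap.IsSymmetric.exists_eq_smul_of_minimal
    (hU : Minimal (fun U => U ≠ ⊥ ∧ IsInvariantSubmodule F U) U) {A : V →ₗ[ℝ] V}
    (hA : A.IsSymmetric) (hAU : ∀ x ∈ U, A x ∈ U) (hAF : ∀ T ∈ F, ∀ x, A (T x) = T (A x)) :
    ∃ r : ℝ, ∀ x ∈ U, A x = r • x := by
  have : Nontrivial U := nontrivial_iff_ne_bot.mpr hU.1.1
  obtain ⟨r, hr⟩ : ∃ r : ℝ, Module.End.HasEigenvalue (A.restrict hAU) r :=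
    ⟨_, (hA.restrict_invariant hAU).hasEigenvalue_iSup_of_finiteDimensional⟩
  obtain ⟨v, hv, hv0⟩ := hr.exists_hasEigenvector
  have hE : Module.End.eigenspace A r ⊓ U ≠ ⊥ ∧
      IsInvariantSubmodule F (Module.End.eigenspace A r ⊓ U) := by
    have hvE : (v : V) ∈ Module.End.eigenspace A r :=
      Module.End.mem_eigenspace_iff.mpr
        (congrArg Subtype.val (Module.End.mem_eigenspace_iff.mp hv))
    refine ⟨(Submodule.ne_bot_iff _).mpr ⟨v, mem_inf.mpr ⟨hvE, v.2⟩, by simpa using hv0⟩, ?_⟩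
    intro T hT x hx
    refine mem_inf.mpr ⟨?_, hU.1.2 T hT x (mem_inf.mp hx).2⟩
    have hxE := Module.End.mem_eigenspace_iff.mp (mem_inf.mp hx).1
    rw [Module.End.mem_eigenspace_iff, hAF T hT, hxE, map_smul]
  have hUE := hU.2 hE inf_le_right
  exact ⟨r, fun x hx => Module.End.mem_eigenspace_iff.mp (hUE hx).1⟩

theorem exists_comp_eq_smul_of_minimal (hcomm : ∀ S ∈ F, ∀ T ∈ F, S ∘ₗ T = T ∘ₗ S)
    (hskew : ∀ T ∈ F, ∀ x y, ⟪T x, y⟫ = -⟪x, T y⟫)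
    (hU : Minimal (fun U => U ≠ ⊥ ∧ IsInvariantSubmodule F U) U)
    {S T : V →ₗ[ℝ] V} (hS : S ∈ F) (hT : T ∈ F) :
    ∃ r : ℝ, ∀ x ∈ U, S (T x) = r • x := by
  have hcomm' : ∀ S ∈ F, ∀ T ∈ F, ∀ x, S (T x) = T (S x) :=
    fun S hS T hT x => LinearMap.congr_fun (hcomm S hS T hT) x
  refine (LinearMap.isSymmetric_comp_of_skew (hskew S hS) (hskew T hT) (hcomm' S hS T hT)
    |>.exists_eq_smul_of_minimal hU (fun x hx => hU.1.2 S hS _ (hU.1.2 T hT x hx)) ?_)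
  intro R hR x
  rw [LinearMap.comp_apply, LinearMap.comp_apply, hcomm' T hT R hR, hcomm' S hS R hR]

theorem exists_eq_smul_of_minimal (hcomm : ∀ S ∈ F, ∀ T ∈ F, S ∘ₗ T = T ∘ₗ S)
    (hskew : ∀ T ∈ F, ∀ x y, ⟪T x, y⟫ = -⟪x, T y⟫)
    (hU : Minimal (fun U => U ≠ ⊥ ∧ IsInvariantSubmodule F U) U)
    {T₀ S : V →ₗ[ℝ] V} (hT₀ : T₀ ∈ F) (hS : S ∈ F) {c₀ : ℝ} (hc₀ : c₀ ≠ 0)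
    (hT₀sq : ∀ x ∈ U, T₀ (T₀ x) = c₀ • x) :
    ∃ a : ℝ, ∀ x ∈ U, S x = a • T₀ x := by
  obtain ⟨c, hc⟩ := exists_comp_eq_smul_of_minimal hcomm hskew hU hS hT₀
  refine ⟨c₀⁻¹ * c, fun x hx => ?_⟩
  calc S x = c₀⁻¹ • S (T₀ (T₀ x)) := by
        rw [hT₀sq x hx, map_smul, inv_smul_smul₀ hc₀]
    _ = (c₀⁻¹ * c) • T₀ x := by rw [hc _ (hU.1.2 T₀ hT₀ x hx), smul_smul]

theorem exists_rotation_pair_of_minimal (hcomm : ∀ S ∈ F, ∀ T ∈ F, S ∘ₗ T = T ∘ₗ S)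
    (hskew : ∀ T ∈ F, ∀ x y, ⟪T x, y⟫ = -⟪x, T y⟫)
    (hU : Minimal (fun U => U ≠ ⊥ ∧ IsInvariantSubmodule F U) U)
    {T₀ : V →ₗ[ℝ] V} (hT₀ : T₀ ∈ F) {x₀ : V} (hx₀ : x₀ ∈ U) (hT₀x₀ : T₀ x₀ ≠ 0) :
    ∃ e f : V, e ∈ U ∧ f ∈ U ∧ ‖e‖ = 1 ∧ ‖f‖ = 1 ∧ ⟪e, f⟫ = 0 ∧
      ∀ S ∈ F, ∃ c : ℝ, S e = c • f ∧ S f = -c • e := by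
  obtain ⟨c₀, hc₀⟩ := exists_comp_eq_smul_of_minimal hcomm hskew hU hT₀ hT₀
  have hx₀0 : x₀ ≠ 0 := by rintro rfl; exact hT₀x₀ (map_zero T₀)
  set e := ‖x₀‖⁻¹ • x₀ with he_def
  have he : e ∈ U := U.smul_mem _ hx₀
  have hne : ‖e‖ = 1 := norm_smul_inv_norm hx₀0
  have hTe : T₀ e ≠ 0 := by
    rw [he_def, map_smul]
    exact smul_ne_zero (inv_ne_zero (norm_ne_zero_iff.mpr hx₀0)) hT₀x₀
  set μ := ‖T₀ e‖
  have hμ : μ ≠ 0 := norm_ne_zero_iff.mpr hTe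
  set f := μ⁻¹ • T₀ e with hf_def
  have hTe_eq : T₀ e = μ • f := (smul_inv_smul₀ hμ _).symm
  have hc₀_eq : c₀ = -μ ^ 2 := by
    have h := hskew T₀ hT₀ (T₀ e) e
    rw [hc₀ e he, real_inner_smul_left, real_inner_self_eq_norm_sq, hne,
      real_inner_self_eq_norm_sq] at h
    linarith
  have hTf_eq : T₀ f = -μ • e := by
    rw [hf_def, map_smul, hc₀ e he, hc₀_eq, smul_smul]
    congr 1
    field_simp
  have hef : ⟪e, f⟫ = 0 := by
    have h0 : ⟪e, T₀ e⟫ = 0 := by linarith [hskew T₀ hT₀ e e, real_inner_comm e (T₀ e)]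
    rw [hf_def, real_inner_smul_right, h0, mul_zero]
  have hf : f ∈ U := U.smul_mem _ (hU.1.2 T₀ hT₀ e he)
  refine ⟨e, f, he, hf, hne, norm_smul_inv_norm hTe, hef, fun S hS => ?_⟩
  obtain ⟨a, ha⟩ := exists_eq_smul_of_minimal hcomm hskew hU hT₀ hS
    (by rw [hc₀_eq]; exact neg_ne_zero.mpr (pow_ne_zero 2 hμ)) hc₀
  refine ⟨a * μ, ?_, ?_⟩
  · rw [ha e he, hTe_eq, smul_smul]
  · rw [ha f hf, hTf_eq, smul_smul, mul_neg]

end Minimal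

structure IsBlockBasis (F : Set (V →ₗ[ℝ] V)) (W : Submodule ℝ V) {ι : Type*}
    (e f : ι → V) : Prop where
  orthonormal : Orthonormal ℝ (Sum.elim e f)
  span_eq : span ℝ (Set.range (Sum.elim e f)) = W
  rotate : ∀ T ∈ F, ∀ i, ∃ c : ℝ, T (e i) = c • f i ∧ T (f i) = -c • e i

namespace IsBlockBasis

variable {F : Set (V →ₗ[ℝ] V)} {U W : Submodule ℝ V}

theorem mem {ι : Type*} {e f : ι → V} (h : IsBlockBasis F W e f) (i : ι ⊕ ι) :
    Sum.elim e f i ∈ W :=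
  h.span_eq ▸ subset_span (Set.mem_range_self i)

theorem isInvariantSubmodule {ι : Type*} {e f : ι → V} (h : IsBlockBasis F W e f) :
    IsInvariantSubmodule F W := by
  intro T hT
  suffices W ≤ W.comap T from fun x hx => this hx
  conv_lhs => rw [← h.span_eq]
  rw [span_le]
  rintro _ ⟨i | i, rfl⟩ <;> obtain ⟨c, he, hf⟩ := h.rotate T hT i
  · simpa [he] using W.smul_mem c (h.mem (.inr i))
  · simpa [hf] using W.smul_mem (-c) (h.mem (.inl i))

theorem of_isEmpty {ι : Type*} [IsEmpty ι] (e f : ι → V) : IsBlockBasis F ⊥ e f where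
  orthonormal := by rw [orthonormal_iff_ite]; rintro (i | i) <;> exact isEmptyElim i
  span_eq := by simp
  rotate _ _ i := isEmptyElim i

theorem pair {e f : V} (he : ‖e‖ = 1) (hf : ‖f‖ = 1) (hef : ⟪e, f⟫ = 0)
    (hrot : ∀ T ∈ F, ∃ c : ℝ, T e = c • f ∧ T f = -c • e) :
    IsBlockBasis F (span ℝ {e, f}) (fun _ : Fin 1 => e) (fun _ => f) where
  orthonormal := by
    classical
    rw [orthonormal_iff_ite]
    rintro (i | i) (j | j) <;> simp [Subsingleton.elim i j, he, hf, hef, real_inner_comm e f]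
  span_eq := by rw [Set.Sum.elim_range, Set.range_const, Set.range_const, Set.singleton_union]
  rotate T hT _ := hrot T hT

theorem comp_equiv {ι κ : Type*} {e f : ι → V} (h : IsBlockBasis F W e f) (σ : κ ≃ ι) :
    IsBlockBasis F W (e ∘ σ) (f ∘ σ) where
  orthonormal := by
    rw [← Sum.elim_comp_map]
    exact h.orthonormal.comp _ (Sum.map_injective.mpr ⟨σ.injective, σ.injective⟩)
  span_eq := by
    rw [← Sum.elim_comp_map, (Sum.map_surjective.mpr ⟨σ.surjective, σ.surjective⟩).range_comp,
      h.span_eq]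
  rotate T hT i := h.rotate T hT (σ i)

theorem sum_elim {ι κ : Type*} {e₁ f₁ : ι → V} {e₂ f₂ : κ → V}
    (h₁ : IsBlockBasis F U e₁ f₁) (h₂ : IsBlockBasis F W e₂ f₂) (hUW : U ⟂ W) :
    IsBlockBasis F (U ⊔ W) (Sum.elim e₁ e₂) (Sum.elim f₁ f₂) := by
  have hshuffle : Sum.elim (Sum.elim e₁ e₂) (Sum.elim f₁ f₂) =
      Sum.elim (Sum.elim e₁ f₁) (Sum.elim e₂ f₂) ∘ Equiv.sumSumSumComm ι κ ι κ := by
    ext ((i | i) | (i | i)) <;> rfl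
  refine ⟨?_, ?_, ?_⟩
  · rw [hshuffle]
    exact (h₁.orthonormal.sum_elim h₂.orthonormal fun i j =>
      hUW.inner_eq (h₁.mem i) (h₂.mem j)).comp _ (Equiv.injective _)
  · rw [hshuffle, EquivLike.range_comp, Set.Sum.elim_range, span_union, h₁.span_eq, h₂.span_eq]
  · rintro T hT (i | i)
    exacts [h₁.rotate T hT i, h₂.rotate T hT i]

end IsBlockBasis

theorem exists_isBlockBasis [FiniteDimensional ℝ V] {F : Set (V →ₗ[ℝ] V)}
    (hcomm : ∀ S ∈ F, ∀ T ∈ F, S ∘ₗ T = T ∘ₗ S)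
    (hskew : ∀ T ∈ F, ∀ x y, ⟪T x, y⟫ = -⟪x, T y⟫) (W : Submodule ℝ V)
    (hW : IsInvariantSubmodule F W) (hker : ∀ x ∈ W, (∀ T ∈ F, T x = 0) → x = 0) :
    ∃ (n : ℕ) (e f : Fin n → V), IsBlockBasis F W e f := by
  induction hd : finrank ℝ W using Nat.strong_induction_on generalizing W with
  | _ d ih =>
  rcases eq_or_ne W ⊥ with rfl | hW0
  · exact ⟨0, Fin.elim0, Fin.elim0, .of_isEmpty _ _⟩
  obtain ⟨U, hUW, hU⟩ := exists_minimal_le_of_wellFoundedLT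
    (fun U => U ≠ ⊥ ∧ IsInvariantSubmodule F U) W ⟨hW0, hW⟩
  obtain ⟨x₀, hx₀, hx₀0⟩ := (Submodule.ne_bot_iff _).mp hU.1.1
  obtain ⟨T₀, hT₀, hT₀x₀⟩ : ∃ T ∈ F, T x₀ ≠ 0 := by
    by_contra! h
    exact hx₀0 (hker x₀ (hUW hx₀) h)
  obtain ⟨e₀, f₀, he₀, hf₀, he₀1, hf₀1, he₀f₀, hrot⟩ :=
    exists_rotation_pair_of_minimal hcomm hskew hU hT₀ hx₀ hT₀x₀
  set P := span ℝ {e₀, f₀}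
  have hP : IsBlockBasis F P _ _ := .pair he₀1 hf₀1 he₀f₀ hrot
  have hPW : P ≤ W :=
    span_le.mpr (Set.insert_subset (hUW he₀) (Set.singleton_subset_iff.mpr (hUW hf₀)))
  have hP0 : finrank ℝ P ≠ 0 := by
    rw [Ne, finrank_eq_zero]
    exact (Submodule.ne_bot_iff _).mpr
      ⟨e₀, subset_span (Set.mem_insert _ _), by rintro rfl; simp at he₀1⟩
  have hrank := finrank_add_inf_finrank_orthogonal hPW
  obtain ⟨n, e, f, hB⟩ := ih _ (by omega) (Pᗮ ⊓ W)
    ((hP.isInvariantSubmodule.orthogonal hskew).inf hW) (fun x hx => hker x hx.2) rfl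
  have hPB := hP.sum_elim hB ((isOrtho_orthogonal_right P).mono_right inf_le_left)
  rw [sup_orthogonal_inf_of_hasOrthogonalProjection hPW] at hPB
  exact ⟨1 + n, _, _, hPB.comp_equiv finSumFinEquiv.symm⟩

end SkewFamily

/-- A commuting family of skew-symmetric endomorphisms of a
finite-dimensional real inner product space can be simultaneously put in
block-diagonal form: there is an orthonormal basis
`{e_1, f_1, …, e_n, f_n} ∪ {basis of the common kernel}` such that every `T` in
the family acts on `span{e_i, f_i}` by the 2×2 block
`[[0, -λ_i(T)], [λ_i(T), 0]]` and kills the remaining basis vectors. -/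
theorem commuting_skew_family_block_diagonal {V : Type*} [NormedAddCommGroup V]
    [InnerProductSpace ℝ V] [FiniteDimensional ℝ V]
    (F : Set (V →ₗ[ℝ] V))
    (hcomm : ∀ S ∈ F, ∀ T ∈ F, S ∘ₗ T = T ∘ₗ S)
    (hskew : ∀ T ∈ F, ∀ x y : V, (inner ℝ (T x) y : ℝ) = -(inner ℝ x (T y) : ℝ)) :
    ∃ (n m : ℕ) (e f : Fin n → V) (g : Fin m → V)
      (lam : (V →ₗ[ℝ] V) → Fin n → ℝ),
      Orthonormal ℝ (Sum.elim (Sum.elim e f) g) ∧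
      Submodule.span ℝ (Set.range (Sum.elim (Sum.elim e f) g)) = ⊤ ∧
      (∀ T ∈ F, ∀ j : Fin m, T (g j) = 0) ∧
      (∀ T ∈ F, ∀ i : Fin n,
        T (e i) = lam T i • f i ∧ T (f i) = -(lam T i) • e i) := by
  set K : Submodule ℝ V := ⨅ T ∈ F, LinearMap.ker T
  have hK : ∀ x, x ∈ K ↔ ∀ T ∈ F, T x = 0 := by simp [K]
  have hKinv : IsInvariantSubmodule F K := fun T hT x hx => by
    rw [(hK x).mp hx T hT]
    exact K.zero_mem
  obtain ⟨n, e, f, hB⟩ := exists_isBlockBasis hcomm hskew Kᗮ (hKinv.orthogonal hskew)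
    fun x hx h0 => (mem_bot ℝ).mp ((orthogonal_disjoint K).le_bot ⟨(hK x).mpr h0, hx⟩)
  obtain ⟨m, g, hg, hgK⟩ := K.exists_orthonormal_span_eq
  have hgmem : ∀ j, g j ∈ K := fun j => hgK ▸ subset_span (Set.mem_range_self j)
  refine ⟨n, m, e, f, g, fun T i => ⟪T (e i), f i⟫,
    hB.orthonormal.sum_elim hg fun i j => inner_left_of_mem_orthogonal (hgmem j) (hB.mem i),
    ?_, fun T hT j => (hK _).mp (hgmem j) T hT, fun T hT i => ?_⟩
  · rw [Set.Sum.elim_range, span_union, hB.span_eq, hgK, sup_comm,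
      sup_orthogonal_of_hasOrthogonalProjection]
  · obtain ⟨c, he, hf⟩ := hB.rotate T hT i
    have hf1 : ‖f i‖ = 1 := by simpa using hB.orthonormal.1 (.inr i)
    have hc : ⟪T (e i), f i⟫ = c := by
      rw [he, real_inner_smul_left, real_inner_self_eq_norm_sq, hf1, one_pow, mul_one]
    dsimp only
    rw [hc]
    exact ⟨he, hf⟩
end

section
/- Let g be a finite-dimensional real Lie algebra, J : g → g with J² = -Id, and ⟨·,·⟩ an inner product with ⟨Jx, Jy⟩ = ⟨x, y⟩. Suppose A ∈ g satisfies: ad_A is skew-symmetric, ad_A commutes with J, and J(ad_A) = ad_A∘J with [A, JA] = 0. Then ad_{JA} is skew-symmetric provided N_J = 0 and the LCK condition dω = θ ∧ ω holds with θ the metric dual of A. -/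
/-- For a Hermitian Lie algebra `(g, J, ⟨·,·⟩)` satisfying the LCK
condition `dω = θ ∧ ω` with `θ` the metric dual of `A`, if `ad_A` is
skew-symmetric, `ad_A` commutes with `J` and `[A, JA] = 0`, then `ad_{JA}` is
skew-symmetric (Proposition 3.4 (4)). -/
theorem adJA_skew {g : Type*} [LieRing g] [LieAlgebra ℝ g]
    (B : g →ₗ[ℝ] g →ₗ[ℝ] ℝ)
    (hsymm : ∀ x y : g, B x y = B y x)
    (hpos : ∀ x : g, x ≠ 0 → 0 < B x x)
    (J : g →ₗ[ℝ] g)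
    (hJ2 : ∀ x : g, J (J x) = -x)
    (hcompat : ∀ x y : g, B (J x) (J y) = B x y)
    (hNJ : ∀ x y : g, ⁅J x, J y⁆ - ⁅x, y⁆ - J (⁅J x, y⁆ + ⁅x, J y⁆) = 0)
    (A : g) (θ : g →ₗ[ℝ] ℝ)
    (hθ : ∀ x : g, θ x = B A x)
    (hθA : θ A = 1)
    (hθclosed : ∀ x y : g, θ ⁅x, y⁆ = 0)
    (hlck : ∀ x y z : g,
      -(B (J ⁅x, y⁆) z) - B (J ⁅y, z⁆) x - B (J ⁅z, x⁆) y
        = θ x * B (J y) z - θ y * B (J x) z + θ z * B (J x) y)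
    (hadA : ∀ x y : g, B ⁅A, x⁆ y = - B x ⁅A, y⁆)
    (hadAJ : ∀ x : g, ⁅A, J x⁆ = J ⁅A, x⁆)
    (hAJA : ⁅A, J A⁆ = 0) :
    ∀ x y : g, B ⁅J A, x⁆ y = - B x ⁅J A, y⁆ := by
  -- ad_{JA} commutes with J, via Nijenhuis and `hadAJ`
  have comm : ∀ y : g, ⁅J A, J y⁆ = J ⁅J A, y⁆ := by
    intro y
    have h := hNJ A y
    rw [hadAJ y, map_add, hJ2] at h
    have h2 : ⁅J A, J y⁆ - J ⁅J A, y⁆ = 0 := by rw [← h]; abel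
    exact sub_eq_zero.mp h2
  -- θ (J A) = 0
  have θJA : θ (J A) = 0 := by
    have h2 := hcompat A (J A)
    rw [hJ2, map_neg, hsymm (J A) A, ← hθ] at h2
    linarith
  -- key symmetry from the LCK condition
  have key : ∀ y z : g, B ⁅J A, J y⁆ z = B ⁅J A, J z⁆ y := by
    intro y z
    have h := hlck (J A) y z
    have e1 : B (J ⁅J A, y⁆) z = B ⁅J A, J y⁆ z := by rw [← comm y]
    have e2 : B (J ⁅y, z⁆) (J A) = 0 := by
      rw [hcompat, hsymm, ← hθ, hθclosed]
    have e3 : B (J ⁅z, J A⁆) y = - B ⁅J A, J z⁆ y := by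
      rw [← lie_skew, map_neg, map_neg, LinearMap.neg_apply, comm z]
    have e4 : B (J (J A)) z = - θ z := by
      rw [hJ2, map_neg, LinearMap.neg_apply, ← hθ]
    have e5 : B (J (J A)) y = - θ y := by
      rw [hJ2, map_neg, LinearMap.neg_apply, ← hθ]
    rw [e1, e2, e3, e4, e5, θJA] at h
    linarith
  intro x y
  have h := key (-(J x)) y
  rw [map_neg, hJ2, neg_neg] at h
  have e6 : B ⁅J A, J y⁆ (-(J x)) = - B x ⁅J A, y⁆ := by
    rw [map_neg, comm y, hcompat, hsymm]
  rw [e6] at h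
  exact h
end

section
/- Let (k, J, ⟨·,·⟩) be a Kähler flat Lie algebra with Milnor decomposition k = z ⊕ h ⊕ k'. Then both z ⊕ h and k' are J-invariant, and ad_H commutes with J for all H ∈ h. Conversely, if J is an almost complex structure compatible with the flat metric satisfying these two conditions, then ∇J = 0, i.e., J is Kähler. -/
/-- For a flat Lie algebra `(k, ⟨·,·⟩)` with Milnor decomposition
`k = z ⊕ h ⊕ k'` and an orthogonal almost complex structure `J`, the metric is
Kähler (`∇J = 0`) if and only if `z ⊕ h` and `k'` are `J`-invariant and `ad_H`
commutes with `J` for every `H ∈ h`. -/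
theorem kahler_flat_iff {k : Type*} [LieRing k] [LieAlgebra ℝ k]
    [Module.Finite ℝ k]
    (B : k →ₗ[ℝ] k →ₗ[ℝ] ℝ)
    (hsymm : ∀ x y : k, B x y = B y x)
    (hpos : ∀ x : k, x ≠ 0 → 0 < B x x)
    -- the Levi-Civita connection, flat
    (nab : k →ₗ[ℝ] k →ₗ[ℝ] k)
    (hkoszul : ∀ x y w : k,
      2 * B (nab x y) w = B ⁅x, y⁆ w - B ⁅y, w⁆ x + B ⁅w, x⁆ y)
    (hflat : ∀ x y w : k, nab x (nab y w) - nab y (nab x w) - nab ⁅x, y⁆ w = 0)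
    -- the Milnor decomposition k = z ⊕ h ⊕ k'
    (z h k' : Submodule ℝ k)
    (hz : ∀ x : k, x ∈ z ↔ ∀ y : k, ⁅x, y⁆ = 0)
    (hk' : ∀ x : k, x ∈ k' ↔ x ∈ LieAlgebra.derivedSeries ℝ k 1)
    (hhab : ∀ x ∈ h, ∀ y ∈ h, ⁅x, y⁆ = (0 : k))
    (hk'ab : ∀ x ∈ k', ∀ y ∈ k', ⁅x, y⁆ = (0 : k))
    (hspan : z ⊔ h ⊔ k' = ⊤)
    (horth₁ : ∀ x ∈ z, ∀ y ∈ h, B x y = 0)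
    (horth₂ : ∀ x ∈ z, ∀ y ∈ k', B x y = 0)
    (horth₃ : ∀ x ∈ h, ∀ y ∈ k', B x y = 0)
    (hnabad : ∀ x ∈ z ⊔ h, ∀ y : k, nab x y = ⁅x, y⁆)
    (hnab0 : ∀ x : k, (∀ y : k, nab x y = 0) ↔ x ∈ z ⊔ k')
    -- the compatible almost complex structure
    (J : k →ₗ[ℝ] k)
    (hJ2 : ∀ x : k, J (J x) = -x)
    (hcompat : ∀ x y : k, B (J x) (J y) = B x y) :
    (∀ x y : k, nab x (J y) = J (nab x y)) ↔
      ((∀ x ∈ z ⊔ h, J x ∈ z ⊔ h) ∧ (∀ x ∈ k', J x ∈ k') ∧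
        (∀ H ∈ h, ∀ y : k, ⁅H, J y⁆ = J ⁅H, y⁆)) := by
  -- elements of `z ⊔ k'` have vanishing covariant derivative
  have hnabzk : ∀ x ∈ z ⊔ k', ∀ y : k, nab x y = 0 := fun x hx => (hnab0 x).mpr hx
  -- orthogonality of `z ⊔ h` and `k'`
  have horthA : ∀ a ∈ z ⊔ h, ∀ b ∈ k', B a b = 0 := by
    intro a ha b hb
    obtain ⟨p, hp, q, hq, rfl⟩ := Submodule.mem_sup.mp ha
    have : B (p + q) b = B p b + B q b := by simp [map_add]
    rw [this, horth₂ p hp b hb, horth₃ q hq b hb, add_zero]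
  -- decomposition of an arbitrary element
  have hdec : ∀ x : k, ∃ a ∈ z ⊔ h, ∃ b ∈ k', x = a + b := by
    intro x
    have hx : x ∈ z ⊔ h ⊔ k' := hspan ▸ Submodule.mem_top
    obtain ⟨a, ha, b, hb, hab⟩ := Submodule.mem_sup.mp hx
    exact ⟨a, ha, b, hb, hab.symm⟩
  -- brackets lie in k'
  have hlie : ∀ a b : k, ⁅a, b⁆ ∈ k' := by
    intro a b
    refine (hk' _).mpr ?_
    rw [LieAlgebra.derivedSeries_def, LieAlgebra.derivedSeriesOfIdeal_succ,
      LieAlgebra.derivedSeriesOfIdeal_zero]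
    exact LieSubmodule.lie_mem_lie trivial trivial
  constructor
  · intro hK
    -- condition (3)
    have cond3 : ∀ H ∈ h, ∀ y : k, ⁅H, J y⁆ = J ⁅H, y⁆ := by
      intro H hH y
      rw [← hnabad H (Submodule.mem_sup_right hH), hK,
        hnabad H (Submodule.mem_sup_right hH)]
    -- J of a single bracket lies in k'
    have key : ∀ a b : k, J ⁅a, b⁆ ∈ k' := by
      intro a b
      obtain ⟨a₁, ha₁, a₂, ha₂, rfl⟩ := hdec a
      obtain ⟨b₁, hb₁, b₂, hb₂, rfl⟩ := hdec b
      have h22 : ⁅a₂, b₂⁆ = (0 : k) := hk'ab _ ha₂ _ hb₂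
      have e : ⁅a₁ + a₂, b₁ + b₂⁆ = nab a₁ (b₁ + b₂) - nab b₁ a₂ := by
        rw [hnabad a₁ ha₁, hnabad b₁ hb₁]
        rw [add_lie, lie_add a₂, h22, add_zero, ← lie_skew b₁ a₂]
        abel
      rw [e, map_sub, ← hK a₁ (b₁ + b₂), ← hK b₁ a₂, hnabad a₁ ha₁, hnabad b₁ hb₁]
      exact Submodule.sub_mem _ (hlie _ _) (hlie _ _)
    -- condition (2)
    have cond2 : ∀ x ∈ k', J x ∈ k' := by
      intro x hx
      have hx' : x ∈ Submodule.span ℝ {m : k | ∃ a ∈ (⊤ : LieIdeal ℝ k),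
          ∃ b ∈ (⊤ : LieIdeal ℝ k), ⁅a, b⁆ = m} := by
        have h1 : x ∈ LieAlgebra.derivedSeries ℝ k 1 := (hk' x).mp hx
        rw [LieAlgebra.derivedSeries_def, LieAlgebra.derivedSeriesOfIdeal_succ,
          LieAlgebra.derivedSeriesOfIdeal_zero] at h1
        rw [← LieSubmodule.mem_toSubmodule, LieSubmodule.lieIdeal_oper_eq_linear_span'] at h1
        exact h1
      refine Submodule.span_induction (p := fun m _ => J m ∈ k') ?_ ?_ ?_ ?_ hx'
      · rintro m ⟨a, -, b, -, rfl⟩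
        exact key a b
      · simp
      · intro m₁ m₂ _ _ h₁ h₂
        rw [map_add]; exact Submodule.add_mem _ h₁ h₂
      · intro t m _ hm
        rw [map_smul]; exact Submodule.smul_mem _ t hm
    -- condition (1)
    have cond1 : ∀ x ∈ z ⊔ h, J x ∈ z ⊔ h := by
      intro x hx
      obtain ⟨a, ha, b, hb, hab⟩ := hdec (J x)
      have hJxb : B (J x) b = 0 := by
        have h1 : B (J x) (J (J b)) = B x (J b) := hcompat x (J b)
        rw [hJ2 b] at h1
        have h2 : B x (J b) = 0 := horthA x hx _ (cond2 b hb)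
        have h3 : B (J x) (-b) = 0 := h1.trans h2
        simpa using h3
      have hbb : B b b = 0 := by
        have h4 : B (J x) b = B a b + B b b := by rw [hab]; simp [map_add]
        rw [hJxb, horthA a ha b hb, zero_add] at h4
        exact h4.symm
      have hb0 : b = 0 := by
        by_contra hne
        exact (hpos b hne).ne' hbb
      rw [hab, hb0, add_zero]
      exact ha
    exact ⟨cond1, cond2, cond3⟩
  · rintro ⟨-, -, h3⟩ x y
    obtain ⟨a, ha, b, hb, rfl⟩ := hdec x
    obtain ⟨p, hp, q, hq, rfl⟩ := Submodule.mem_sup.mp ha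
    have hp0 : ∀ w : k, nab p w = 0 := hnabzk p (Submodule.mem_sup_left hp)
    have hb0 : ∀ w : k, nab b w = 0 := hnabzk b (Submodule.mem_sup_right hb)
    have hred : ∀ w : k, nab (p + q + b) w = nab q w := by
      intro w
      have : nab (p + q + b) w = nab p w + nab q w + nab b w := by
        simp [map_add]
      rw [this, hp0, hb0, zero_add, add_zero]
    rw [hred (J y), hred y, hnabad q (Submodule.mem_sup_right hq),
      hnabad q (Submodule.mem_sup_right hq)]
    exact h3 q hq y
end
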